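/- For every irrational α, liminf_{t→∞} t·μ_α(t) = liminf_{t→∞} t·ψ_α(t), where ψ_α(t) = min_{1 ≤ x ≤ t, x ∈ ℤ} ||xα|| and μ_α is the Minkowski diagonal function of α. -/

import Mathlib

/-!
On each interval `[q_ν, q_{ν+1})` between consecutive convergent denominators, `ψ_α` is
constant, equal to `|q_ν α - p_ν|` (Lagrange's best approximation theorem), so `t ψ_α(t)` is
smallest at the left endpoint and its lower limit is that of `q_ν |q_ν α - p_ν|`.
On `[Q_n, Q_{n+1}]` the function `t μ_α(t)` is a concave quadratic, because `‖Q_n α‖`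
decreases, so it is bounded below by its smaller value at the two nodes, where it equals
`Q_n ‖Q_n α‖`. Finally the `Q_n` are exactly the `q_ν` with `q_ν |q_ν α - p_ν| < 1/2`, and
discarding the terms `≥ 1/2` does not change a lower limit that is `< 1/2`.
-/

open Real Filter Set

/-- The function F from the paper. -/
noncomputable def Fm (x y : ℝ) : ℝ := (1 - x*y)^2 / (4*(1+x*y)*(1-x)*(1-y))

/-- The function G from the paper. -/
noncomputable def Gm (x y : ℝ) : ℝ := (x + y + 1)/4

/-- Complete quotients of α : cq α 0 = α, cq α (n+1) = 1/{cq α n}. -/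
noncomputable def cq (α : ℝ) : ℕ → ℝ
  | 0 => α
  | n+1 => (Int.fract (cq α n))⁻¹

/-- Partial quotients a_n of the continued fraction of α. -/
noncomputable def pquot (α : ℝ) (n : ℕ) : ℤ := ⌊cq α n⌋

/-- Denominators q_n of the convergents of α. -/
noncomputable def qd (α : ℝ) : ℕ → ℝ
  | 0 => 1
  | 1 => (pquot α 1 : ℝ)
  | n+2 => (pquot α (n+2) : ℝ) * qd α (n+1) + qd α n

/-- Numerators p_n of the convergents of α. -/
noncomputable def pnum (α : ℝ) : ℕ → ℝ
  | 0 => (pquot α 0 : ℝ)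
  | 1 => (pquot α 1 : ℝ) * (pquot α 0 : ℝ) + 1
  | n+2 => (pquot α (n+2) : ℝ) * pnum α (n+1) + pnum α n

/-- ξ_n = |q_n α - p_n|. -/
noncomputable def xi (α : ℝ) (n : ℕ) : ℝ := |qd α n * α - pnum α n|

/-- α*_n = [0; a_n, ..., a_1] = q_{n-1}/q_n. -/
noncomputable def astar (α : ℝ) (n : ℕ) : ℝ := qd α (n-1) / qd α n

/-- Distance from x to the nearest integer. -/
noncomputable def nidist (x : ℝ) : ℝ := |x - round x|

/-- The ν-th convergent denominator satisfies the Legendre condition. -/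
noncomputable def LegendreDen (α : ℝ) (ν : ℕ) : Prop :=
  |α - pnum α ν / qd α ν| < 1/(2 * (qd α ν)^2)

/-- ψ_α(t) = min_{1 ≤ x ≤ t} ‖xα‖. -/
noncomputable def psif (α : ℝ) (t : ℝ) : ℝ :=
  sInf {d : ℝ | ∃ x : ℤ, 1 ≤ x ∧ (x:ℝ) ≤ t ∧ d = nidist (x*α)}

section Liminf

variable {ι κ γ : Type*} [ConditionallyCompleteLinearOrder γ] [DenselyOrdered γ]
  {l : Filter ι} {l' : Filter κ} {f : ι → γ} {g : κ → γ}

theorem liminf_le_liminf_of_exists_le_of_lt (hf : IsBoundedUnder (· ≥ ·) l f)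
    (hg : IsCoboundedUnder (· ≥ ·) l' g) {C : γ} (hC : liminf f l ≤ C)
    (h : ∀ s ∈ l, ∀ᶠ j in l', g j < C → ∃ i ∈ s, f i ≤ g j) :
    liminf f l ≤ liminf g l' := by
  by_contra! hlt
  obtain ⟨c, hgc, hcf⟩ := exists_between hlt
  obtain ⟨j, hj, hgj⟩ :=
    ((h _ (eventually_lt_of_lt_liminf hcf hf)).and_frequently
      (frequently_lt_of_liminf_lt hg hgc)).exists
  obtain ⟨i, hci, hfi⟩ := hj (hgj.trans (hcf.trans_le hC))
  exact (hci.trans_le hfi).not_gt hgj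

theorem liminf_le_liminf_of_exists_le (hf : IsBoundedUnder (· ≥ ·) l f)
    (hg : IsCoboundedUnder (· ≥ ·) l' g)
    (h : ∀ s ∈ l, ∀ᶠ j in l', ∃ i ∈ s, f i ≤ g j) :
    liminf f l ≤ liminf g l' :=
  liminf_le_liminf_of_exists_le_of_lt hf hg le_rfl fun s hs => (h s hs).mono fun _ hj _ => hj

end Liminf

theorem eventually_exists_mem_Ico_of_tendsto {β : Type*} [LinearOrder β] [NoMaxOrder β]
    {u : ℕ → β} (hu : Tendsto u atTop atTop) (N : ℕ) :
    ∀ᶠ t in atTop, ∃ n ≥ N, t ∈ Ico (u n) (u (n + 1)) := by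
  filter_upwards [eventually_ge_atTop (u N)] with t ht
  by_contra! hcon
  have hle : ∀ n ≥ N, u n ≤ t := fun n hn =>
    Nat.le_induction ht (fun k hk hkt => not_lt.1 fun h => hcon k hk ⟨hkt, h⟩) n hn
  obtain ⟨n, htn, hn⟩ := ((hu.eventually_gt_atTop t).and (eventually_ge_atTop N)).exists
  exact htn.not_ge (hle n hn)

theorem liminf_eq_liminf_of_nodes {β γ : Type*} [LinearOrder β] [NoMaxOrder β]
    [ConditionallyCompleteLinearOrder γ] [DenselyOrdered γ] {F : β → γ} {u : ℕ → β}
    {g : ℕ → γ} (hu : Tendsto u atTop atTop)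
    (hg : IsBoundedUnder (· ≥ ·) atTop g) (hg' : IsCoboundedUnder (· ≥ ·) atTop g)
    (hFu : ∀ᶠ n in atTop, F (u n) = g n)
    (hFg : ∀ n, ∀ t ∈ Ico (u n) (u (n + 1)), min (g n) (g (n + 1)) ≤ F t) :
    liminf F atTop = liminf g atTop := by
  have hcell := eventually_exists_mem_Ico_of_tendsto hu
  have hF : IsBoundedUnder (· ≥ ·) atTop F := by
    obtain ⟨b, hb⟩ := hg
    obtain ⟨N, hN⟩ := (eventually_map.1 hb).exists_forall_of_atTop
    refine ⟨b, eventually_map.2 ((hcell N).mono fun t ⟨n, hn, ht⟩ => ?_)⟩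
    exact (le_min (hN n hn) (hN (n + 1) (by omega))).trans (hFg n t ht)
  have hF' : IsCoboundedUnder (· ≥ ·) atTop F := by
    obtain ⟨b, hb⟩ := hg'
    refine ⟨b, fun a ha => hb a (eventually_map.2 ?_)⟩
    filter_upwards [hFu, hu.eventually (eventually_map.1 ha)] with n hn han
    exact hn ▸ han
  apply le_antisymm
  · refine liminf_le_liminf_of_exists_le hF hg' fun s hs => ?_
    filter_upwards [hFu, hu.eventually hs] with n hn hns using ⟨u n, hns, hn.le⟩
  · refine liminf_le_liminf_of_exists_le hg hF' fun s hs => ?_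
    obtain ⟨N, hN⟩ := mem_atTop_sets.1 hs
    filter_upwards [hcell N] with t ⟨n, hn, ht⟩
    rcases min_le_iff.1 (hFg n t ht) with h | h
    exacts [⟨n, hN n hn, h⟩, ⟨n + 1, hN _ (by omega), h⟩]

/-- When `B ≤ A`, `t ↦ t * (interpolant)` is a concave quadratic, hence lies above its chord. -/
theorem min_le_mul_interpolation {s u A B t : ℝ} (hsu : s < u) (hBA : B ≤ A) (hst : s ≤ t)
    (htu : t ≤ u) :
    min (s * A) (u * B) ≤ t * ((u - t) / (u - s) * A + (t - s) / (u - s) * B) := by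
  have hd : 0 < u - s := sub_pos.2 hsu
  have hsplit : t * ((u - t) / (u - s) * A + (t - s) / (u - s) * B) =
      ((u - t) * (s * A) + (t - s) * (u * B)) / (u - s) +
        (A - B) * (t - s) * (u - t) / (u - s) := by
    field_simp
    ring
  have hchord : min (s * A) (u * B) ≤ ((u - t) * (s * A) + (t - s) * (u * B)) / (u - s) := by
    rw [le_div_iff₀ hd]
    nlinarith [min_le_left (s * A) (u * B), min_le_right (s * A) (u * B)]
  have hbulge : 0 ≤ (A - B) * (t - s) * (u - t) / (u - s) := by
    have := sub_nonneg.2 hBA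
    have := sub_nonneg.2 hst
    have := sub_nonneg.2 htu
    positivity
  linarith

section ContinuedFraction

variable {α : ℝ}

theorem irrational_cq (hα : Irrational α) : ∀ n, Irrational (cq α n)
  | 0 => hα
  | n + 1 => ((irrational_cq hα n).sub_intCast _).inv

theorem fract_cq_pos (hα : Irrational α) (n : ℕ) : 0 < Int.fract (cq α n) :=
  Int.fract_pos.2 ((irrational_cq hα n).ne_int _)

theorem fract_cq_eq_inv (n : ℕ) : Int.fract (cq α n) = (cq α (n + 1))⁻¹ :=
  (inv_inv _).symm

theorem one_lt_cq_succ (hα : Irrational α) (n : ℕ) : 1 < cq α (n + 1) :=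
  one_lt_inv_iff₀.2 ⟨fract_cq_pos hα n, Int.fract_lt_one _⟩

theorem one_le_pquot_succ (hα : Irrational α) (n : ℕ) : (1 : ℝ) ≤ pquot α (n + 1) := by
  exact_mod_cast Int.le_floor.2 (by exact_mod_cast (one_lt_cq_succ hα n).le)

theorem one_le_qd (hα : Irrational α) : ∀ n, 1 ≤ qd α n
  | 0 => le_rfl
  | 1 => one_le_pquot_succ hα 0
  | n + 2 => by
    have ha := one_le_pquot_succ hα (n + 1)
    have h1 := one_le_qd hα (n + 1)
    have h0 := one_le_qd hα n
    rw [qd]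
    nlinarith

theorem qd_add_qd_le (hα : Irrational α) (n : ℕ) :
    qd α (n + 1) + qd α n ≤ qd α (n + 2) := by
  have ha := one_le_pquot_succ hα (n + 1)
  have h1 := one_le_qd hα (n + 1)
  rw [qd]
  nlinarith

theorem qd_le_qd_succ (hα : Irrational α) : ∀ n, qd α n ≤ qd α (n + 1)
  | 0 => one_le_qd hα 1
  | n + 1 => by linarith [qd_add_qd_le hα n, one_le_qd hα n]

theorem qd_monotone (hα : Irrational α) : Monotone (qd α) :=
  monotone_nat_of_le_succ (qd_le_qd_succ hα)

theorem qd_succ_lt_qd_succ_succ (hα : Irrational α) (n : ℕ) :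
    qd α (n + 1) < qd α (n + 2) := by
  linarith [qd_add_qd_le hα n, one_le_qd hα n]

theorem natCast_le_qd (hα : Irrational α) : ∀ n : ℕ, (n : ℝ) ≤ qd α n
  | 0 => by simp [qd]
  | 1 => by simpa using one_le_qd hα 1
  | n + 2 => by
    have ih := natCast_le_qd hα (n + 1)
    push_cast at ih ⊢
    linarith [qd_add_qd_le hα n, one_le_qd hα n]

theorem tendsto_qd_atTop (hα : Irrational α) : Tendsto (qd α) atTop atTop :=
  tendsto_atTop_mono (natCast_le_qd hα) tendsto_natCast_atTop_atTop

theorem exists_intCast_eq_qd : ∀ n, ∃ z : ℤ, (z : ℝ) = qd α n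
  | 0 => ⟨1, by simp [qd]⟩
  | 1 => ⟨pquot α 1, rfl⟩
  | n + 2 => by
    obtain ⟨a, ha⟩ : ∃ z : ℤ, (z : ℝ) = qd α (n + 1) := exists_intCast_eq_qd (n + 1)
    obtain ⟨b, hb⟩ : ∃ z : ℤ, (z : ℝ) = qd α n := exists_intCast_eq_qd n
    exact ⟨pquot α (n + 2) * a + b, by rw [qd, ← ha, ← hb]; push_cast; ring⟩

theorem exists_intCast_eq_pnum : ∀ n, ∃ z : ℤ, (z : ℝ) = pnum α n
  | 0 => ⟨pquot α 0, rfl⟩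
  | 1 => ⟨pquot α 1 * pquot α 0 + 1, by rw [pnum]; push_cast; ring⟩
  | n + 2 => by
    obtain ⟨a, ha⟩ : ∃ z : ℤ, (z : ℝ) = pnum α (n + 1) := exists_intCast_eq_pnum (n + 1)
    obtain ⟨b, hb⟩ : ∃ z : ℤ, (z : ℝ) = pnum α n := exists_intCast_eq_pnum n
    exact ⟨pquot α (n + 2) * a + b, by rw [pnum, ← ha, ← hb]; push_cast; ring⟩

theorem pnum_mul_qd_sub_pnum_mul_qd : ∀ n : ℕ,
    pnum α (n + 1) * qd α n - pnum α n * qd α (n + 1) = (-1) ^ n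
  | 0 => by simp only [pnum, qd]; ring
  | n + 1 => by
    rw [pnum, qd, pow_succ, ← pnum_mul_qd_sub_pnum_mul_qd n]
    ring

noncomputable def theta (α : ℝ) (n : ℕ) : ℝ := qd α n * α - pnum α n

theorem xi_eq_abs_theta (n : ℕ) : xi α n = |theta α n| := rfl

theorem theta_zero : theta α 0 = Int.fract α := by
  simp only [theta, qd, pnum, pquot, one_mul, cq]
  rfl

theorem theta_succ_succ (n : ℕ) :
    theta α (n + 2) = pquot α (n + 2) * theta α (n + 1) + theta α n := by
  simp only [theta, qd, pnum]
  ring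

theorem theta_succ (hα : Irrational α) : ∀ n,
    theta α (n + 1) = -Int.fract (cq α (n + 1)) * theta α n
  | 0 => by
    have hf : Int.fract α ≠ 0 := (fract_cq_pos hα 0).ne'
    have hcq : Int.fract (cq α 1) = (Int.fract α)⁻¹ - pquot α 1 := (Int.self_sub_floor _).symm
    have hα' : α = ⌊α⌋ + Int.fract α := (Int.floor_add_fract α).symm
    rw [theta_zero, hcq]
    simp only [theta, qd, pnum]
    rw [show pquot α 0 = ⌊α⌋ from rfl]
    field_simp
    linear_combination (pquot α 1 : ℝ) * hα'
  | n + 1 => by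
    have hc : cq α (n + 2) ≠ 0 := (zero_lt_one.trans (one_lt_cq_succ hα (n + 1))).ne'
    have hprev : theta α n = -cq α (n + 2) * theta α (n + 1) := by
      rw [theta_succ hα n, fract_cq_eq_inv]
      field_simp
    have hfr : Int.fract (cq α (n + 2)) = cq α (n + 2) - pquot α (n + 2) :=
      (Int.self_sub_floor _).symm
    rw [theta_succ_succ, hprev, hfr]
    ring

theorem xi_succ (hα : Irrational α) (n : ℕ) :
    xi α (n + 1) = Int.fract (cq α (n + 1)) * xi α n := by
  rw [xi_eq_abs_theta, xi_eq_abs_theta, theta_succ hα, abs_mul, abs_neg,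
    abs_of_pos (fract_cq_pos hα _)]

theorem xi_pos (hα : Irrational α) : ∀ n, 0 < xi α n
  | 0 => by rw [xi_eq_abs_theta, theta_zero]; exact abs_pos.2 (fract_cq_pos hα 0).ne'
  | n + 1 => by rw [xi_succ hα]; exact mul_pos (fract_cq_pos hα _) (xi_pos hα n)

theorem xi_strictAnti (hα : Irrational α) : StrictAnti (xi α) :=
  strictAnti_nat_of_succ_lt fun n => by
    rw [xi_succ hα]
    exact mul_lt_of_lt_one_left (xi_pos hα n) (Int.fract_lt_one _)

theorem theta_eq_neg_one_pow_mul_xi (hα : Irrational α) : ∀ n, theta α n = (-1) ^ n * xi α n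
  | 0 => by rw [pow_zero, one_mul, xi_eq_abs_theta, abs_of_pos (theta_zero ▸ fract_cq_pos hα 0)]
  | n + 1 => by
    rw [theta_succ hα, theta_eq_neg_one_pow_mul_xi hα n, xi_succ hα, pow_succ]
    ring

theorem qd_succ_mul_xi_add_qd_mul_xi_succ (hα : Irrational α) (n : ℕ) :
    qd α (n + 1) * xi α n + qd α n * xi α (n + 1) = 1 := by
  have hdet : qd α (n + 1) * theta α n - qd α n * theta α (n + 1) = (-1) ^ n := by
    rw [← pnum_mul_qd_sub_pnum_mul_qd]
    simp only [theta]
    ring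
  rw [theta_eq_neg_one_pow_mul_xi hα, theta_eq_neg_one_pow_mul_xi hα, pow_succ] at hdet
  have hsq : ((-1 : ℝ) ^ n) ^ 2 = 1 := by rw [← pow_mul, mul_comm, pow_mul]; norm_num
  linear_combination
    (-1 : ℝ) ^ n * hdet + (1 - qd α (n + 1) * xi α n - qd α n * xi α (n + 1)) * hsq

theorem qd_mul_xi_lt_one (hα : Irrational α) (n : ℕ) : qd α n * xi α n < 1 := by
  have h := qd_succ_mul_xi_add_qd_mul_xi_succ hα n
  have hq := mul_le_mul_of_nonneg_right (qd_le_qd_succ hα n) (xi_pos hα n).le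
  have hpos := mul_pos (zero_lt_one.trans_le (one_le_qd hα n)) (xi_pos hα (n + 1))
  linarith

end ContinuedFraction

section Approximation

variable {α : ℝ}

theorem legendreDen_iff (hα : Irrational α) (n : ℕ) :
    LegendreDen α n ↔ qd α n * xi α n < 1 / 2 := by
  have hq : 0 < qd α n := zero_lt_one.trans_le (one_le_qd hα n)
  have habs : |α - pnum α n / qd α n| = xi α n / qd α n := by
    rw [xi, ← abs_of_pos hq, ← abs_div, abs_of_pos hq, sub_div, mul_div_cancel_left₀ _ hq.ne']
  rw [LegendreDen, habs, div_lt_div_iff₀ hq (by positivity)]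
  constructor <;> intro h <;> nlinarith

theorem nidist_qd_mul_eq_xi {n : ℕ} (h : xi α n < 1 / 2) : nidist (qd α n * α) = xi α n := by
  obtain ⟨p, hp⟩ := exists_intCast_eq_pnum (α := α) n
  rw [xi, ← hp] at h ⊢
  have hround : round (qd α n * α) = p := by
    rw [round_eq_iff]
    constructor <;> linarith [abs_lt.1 h]
  rw [nidist, hround]

theorem nidist_qd_mul_eq_xi_of_legendreDen (hα : Irrational α) {n : ℕ} (h : LegendreDen α n) :
    nidist (qd α n * α) = xi α n := by
  apply nidist_qd_mul_eq_xi
  have := (legendreDen_iff hα n).1 h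
  nlinarith [one_le_qd hα n, xi_pos hα n]

/-- The matrix `(q_ν q_{ν+1}; p_ν p_{ν+1})` is unimodular. -/
theorem exists_int_eq_qd_pnum_combination (ν : ℕ) (x y : ℤ) :
    ∃ m k : ℤ, (x : ℝ) = m * qd α ν + k * qd α (ν + 1) ∧
      (y : ℝ) = m * pnum α ν + k * pnum α (ν + 1) := by
  obtain ⟨a, ha⟩ := exists_intCast_eq_qd (α := α) ν
  obtain ⟨b, hb⟩ := exists_intCast_eq_qd (α := α) (ν + 1)
  obtain ⟨c, hc⟩ := exists_intCast_eq_pnum (α := α) ν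
  obtain ⟨d, hd⟩ := exists_intCast_eq_pnum (α := α) (ν + 1)
  have hdet := pnum_mul_qd_sub_pnum_mul_qd (α := α) ν
  have hsq : ((-1 : ℝ) ^ ν) ^ 2 = 1 := by rw [← pow_mul, mul_comm, pow_mul]; norm_num
  refine ⟨(-1) ^ ν * (x * d - y * b), (-1) ^ ν * (y * a - x * c), ?_, ?_⟩ <;>
    push_cast <;> rw [ha, hb, hc, hd]
  · linear_combination (-(x : ℝ)) * (-1) ^ ν * hdet - x * hsq
  · linear_combination (-(y : ℝ)) * (-1) ^ ν * hdet - y * hsq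

/-- Lagrange's best approximation theorem. -/
theorem xi_le_abs_mul_sub (hα : Irrational α) (ν : ℕ) {x : ℤ} (y : ℤ) (hx : 1 ≤ x)
    (hxq : (x : ℝ) < qd α (ν + 1)) : xi α ν ≤ |x * α - y| := by
  obtain ⟨m, k, hxmk, hymk⟩ := exists_int_eq_qd_pnum_combination (α := α) ν x y
  have hq := one_le_qd hα ν
  have hx' : (1 : ℝ) ≤ x := by exact_mod_cast hx
  -- `x ≥ 1` and `x < q_{ν+1}` force `m ≠ 0` and `m`, `k` of opposite (weak) signs.
  have hsign : (1 : ℝ) ≤ m ∧ (k : ℝ) ≤ 0 ∨ (m : ℝ) ≤ -1 ∧ (0 : ℝ) ≤ k := by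
    have hb := one_le_qd hα (ν + 1)
    rcases lt_trichotomy m 0 with hm | rfl | hm
    · have hm' : (m : ℝ) ≤ -1 := Int.cast_le_neg_one_of_neg hm
      refine Or.inr ⟨hm', Int.cast_nonneg (le_of_not_gt fun hk => ?_)⟩
      nlinarith [Int.cast_le_neg_one_of_neg (R := ℝ) hk]
    · push_cast at hxmk
      rcases le_or_gt k 0 with hk | hk
      · nlinarith [Int.cast_nonpos (R := ℝ) |>.2 hk]
      · nlinarith [Int.cast_one_le_of_pos (R := ℝ) hk]
    · have hm' : (1 : ℝ) ≤ m := Int.cast_one_le_of_pos hm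
      refine Or.inl ⟨hm', Int.cast_nonpos.2 (le_of_not_gt fun hk => ?_)⟩
      nlinarith [Int.cast_one_le_of_pos (R := ℝ) hk]
  have hval : (x : ℝ) * α - y = (-1) ^ ν * (m * xi α ν - k * xi α (ν + 1)) := by
    rw [hxmk, hymk, ← sub_eq_zero]
    have h0 := theta_eq_neg_one_pow_mul_xi hα ν
    have h1 := theta_eq_neg_one_pow_mul_xi hα (ν + 1)
    simp only [theta, pow_succ] at h0 h1
    linear_combination (m : ℝ) * h0 + (k : ℝ) * h1
  rw [hval, abs_mul, abs_pow, abs_neg, abs_one, one_pow, one_mul]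
  have h0 := xi_pos hα ν
  have h1 := xi_pos hα (ν + 1)
  rcases hsign with ⟨hm, hk⟩ | ⟨hm, hk⟩
  · exact le_abs.2 (Or.inl (by nlinarith))
  · exact le_abs.2 (Or.inr (by nlinarith))

theorem psif_eq_xi (hα : Irrational α) {ν : ℕ} {t : ℝ} (h1 : qd α ν ≤ t)
    (h2 : t < qd α (ν + 1)) :
    psif α t = xi α ν := by
  obtain ⟨q, hq⟩ := exists_intCast_eq_qd (α := α) ν
  obtain ⟨p, hp⟩ := exists_intCast_eq_pnum (α := α) ν
  have hq1 : (1 : ℝ) ≤ q := hq ▸ one_le_qd hα ν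
  apply le_antisymm
  · calc psif α t ≤ nidist (q * α) :=
          csInf_le ⟨0, by rintro d ⟨x, -, -, rfl⟩; exact abs_nonneg _⟩
            ⟨q, by exact_mod_cast hq1, hq ▸ h1, rfl⟩
      _ ≤ |q * α - p| := round_le _ _
      _ = xi α ν := by rw [hq, hp, xi]
  · refine le_csInf ⟨_, 1, le_rfl, by push_cast; linarith, rfl⟩ ?_
    rintro d ⟨x, hx1, hxt, rfl⟩
    exact xi_le_abs_mul_sub hα ν _ hx1 (hxt.trans_lt h2)

theorem liminf_mul_psif_eq (hα : Irrational α) :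
    liminf (fun t => t * psif α t) atTop = liminf (fun ν => qd α ν * xi α ν) atTop := by
  refine liminf_eq_liminf_of_nodes (tendsto_qd_atTop hα)
    (isBoundedUnder_of_eventually_ge (a := 0) (Eventually.of_forall fun ν =>
      mul_nonneg (zero_le_one.trans (one_le_qd hα ν)) (xi_pos hα ν).le))
    (isCoboundedUnder_ge_of_le _ fun ν => (qd_mul_xi_lt_one hα ν).le) ?_ ?_
  · filter_upwards [eventually_ge_atTop 1] with ν hν
    obtain ⟨k, rfl⟩ := Nat.exists_eq_add_of_le' hν
    rw [psif_eq_xi hα le_rfl (qd_succ_lt_qd_succ_succ hα k)]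
  · intro ν t ht
    rw [psif_eq_xi hα ht.1 ht.2]
    exact min_le_of_left_le (mul_le_mul_of_nonneg_right ht.1 (xi_pos hα ν).le)

end Approximation

section LegendreSubsequence

variable {α : ℝ} {Q : ℕ → ℝ}

theorem tendsto_atTop_of_strictMono_of_forall_eq_qd (hα : Irrational α) (hQmono : StrictMono Q)
    (hQ : ∀ n, ∃ ν, Q n = qd α ν) : Tendsto Q atTop atTop := by
  choose ν hν using hQ
  have hνmono : StrictMono ν := fun m n hmn =>
    (qd_monotone hα).reflect_lt (by rw [← hν, ← hν]; exact hQmono hmn)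
  rw [show Q = qd α ∘ ν from funext hν]
  exact (tendsto_qd_atTop hα).comp hνmono.tendsto_atTop

variable (hα : Irrational α) (hQmono : StrictMono Q)
  (hQmem : ∀ n, ∃ ν, Q n = qd α ν ∧ LegendreDen α ν)
include hα hQmem

theorem mul_nidist_lt_half (n : ℕ) : Q n * nidist (Q n * α) < 1 / 2 := by
  obtain ⟨ν, hν, hleg⟩ := hQmem n
  rw [hν, nidist_qd_mul_eq_xi_of_legendreDen hα hleg]
  exact (legendreDen_iff hα ν).1 hleg

include hQmono in
theorem nidist_mul_succ_le (n : ℕ) : nidist (Q (n + 1) * α) ≤ nidist (Q n * α) := by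
  obtain ⟨ν, hν, hleg⟩ := hQmem n
  obtain ⟨ν', hν', hleg'⟩ := hQmem (n + 1)
  rw [hν, hν', nidist_qd_mul_eq_xi_of_legendreDen hα hleg,
    nidist_qd_mul_eq_xi_of_legendreDen hα hleg']
  refine (xi_strictAnti hα).antitone ((qd_monotone hα).reflect_lt ?_).le
  rw [← hν, ← hν']
  exact hQmono n.lt_succ_self

include hQmono in
theorem liminf_mul_mu_eq {μ : ℝ → ℝ}
    (hμ : ∀ n, ∀ t ∈ Set.Icc (Q n) (Q (n+1)),
      μ t = ((Q (n+1) - t)/(Q (n+1) - Q n)) * nidist (Q n * α)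
          + ((t - Q n)/(Q (n+1) - Q n)) * nidist (Q (n+1) * α)) :
    liminf (fun t => t * μ t) atTop = liminf (fun n => Q n * nidist (Q n * α)) atTop := by
  have hQ1 (n : ℕ) : 1 ≤ Q n := by
    obtain ⟨ν, hν, -⟩ := hQmem n
    exact hν ▸ one_le_qd hα ν
  refine liminf_eq_liminf_of_nodes
    (tendsto_atTop_of_strictMono_of_forall_eq_qd hα hQmono
      fun n => (hQmem n).imp fun _ => And.left)
    (isBoundedUnder_of_eventually_ge (a := 0) (Eventually.of_forall fun n =>
      mul_nonneg (zero_le_one.trans (hQ1 n)) (abs_nonneg _)))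
    (isCoboundedUnder_ge_of_le _ fun n => (mul_nidist_lt_half hα hQmem n).le)
    (Eventually.of_forall fun n => ?_) fun n t ht => ?_
  · have hgap : Q (n + 1) - Q n ≠ 0 := sub_ne_zero.2 (hQmono n.lt_succ_self).ne'
    rw [hμ n (Q n) ⟨le_rfl, (hQmono n.lt_succ_self).le⟩, div_self hgap, sub_self, zero_div]
    ring
  · rw [hμ n t (Ico_subset_Icc_self ht)]
    exact min_le_mul_interpolation (hQmono n.lt_succ_self) (nidist_mul_succ_le hα hQmono hQmem n)
      ht.1 ht.2.le

include hQmono in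
theorem liminf_mul_nidist_eq (hQall : ∀ ν, LegendreDen α ν → ∃ n, Q n = qd α ν) :
    liminf (fun n => Q n * nidist (Q n * α)) atTop =
      liminf (fun ν => qd α ν * xi α ν) atTop := by
  have hQt := tendsto_atTop_of_strictMono_of_forall_eq_qd hα hQmono
    fun n => (hQmem n).imp fun _ => And.left
  have hbdd : IsBoundedUnder (· ≥ ·) atTop fun n => Q n * nidist (Q n * α) :=
    isBoundedUnder_of_eventually_ge (a := 0) (Eventually.of_forall fun n => by
      obtain ⟨ν, hν, -⟩ := hQmem n
      exact mul_nonneg (hν ▸ zero_le_one.trans (one_le_qd hα ν)) (abs_nonneg _))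
  apply le_antisymm
  · refine liminf_le_liminf_of_exists_le_of_lt hbdd
      (isCoboundedUnder_ge_of_le _ fun ν => (qd_mul_xi_lt_one hα ν).le)
      (liminf_le_of_frequently_le
        (Frequently.of_forall fun n => (mul_nidist_lt_half hα hQmem n).le) hbdd)
      fun s hs => ?_
    obtain ⟨N, hN⟩ := mem_atTop_sets.1 hs
    filter_upwards [(tendsto_qd_atTop hα).eventually_gt_atTop (Q N)] with ν hν hlt
    have hleg := (legendreDen_iff hα ν).2 hlt
    obtain ⟨n, hn⟩ := hQall ν hleg
    refine ⟨n, hN n (hQmono.lt_iff_lt.1 (hn ▸ hν)).le, ?_⟩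
    rw [hn, nidist_qd_mul_eq_xi_of_legendreDen hα hleg]
  · refine liminf_le_liminf_of_exists_le
      (isBoundedUnder_of_eventually_ge (a := 0) (Eventually.of_forall fun ν =>
        mul_nonneg (zero_le_one.trans (one_le_qd hα ν)) (xi_pos hα ν).le))
      (isCoboundedUnder_ge_of_le _ fun n => (mul_nidist_lt_half hα hQmem n).le) fun s hs => ?_
    obtain ⟨N, hN⟩ := mem_atTop_sets.1 hs
    filter_upwards [hQt.eventually_gt_atTop (qd α N)] with n hn
    obtain ⟨ν, hν, hleg⟩ := hQmem n
    refine ⟨ν, hN ν ((qd_monotone hα).reflect_lt (hν ▸ hn)).le, ?_⟩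
    rw [hν, nidist_qd_mul_eq_xi_of_legendreDen hα hleg]

end LegendreSubsequence

theorem stmt18 (α : ℝ) (hα : Irrational α)
    (Q : ℕ → ℝ) (hQmono : StrictMono Q)
    (hQmem : ∀ n, ∃ ν, Q n = qd α ν ∧ LegendreDen α ν)
    (hQall : ∀ ν, LegendreDen α ν → ∃ n, Q n = qd α ν)
    (μ : ℝ → ℝ)
    (hμ : ∀ n, ∀ t ∈ Set.Icc (Q n) (Q (n+1)),
      μ t = ((Q (n+1) - t)/(Q (n+1) - Q n)) * nidist (Q n * α)
          + ((t - Q n)/(Q (n+1) - Q n)) * nidist (Q (n+1) * α)) :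
    Filter.liminf (fun t => t * μ t) Filter.atTop
      = Filter.liminf (fun t => t * psif α t) Filter.atTop := by
  rw [liminf_mul_mu_eq hα hQmono hQmem hμ, liminf_mul_nidist_eq hα hQmono hQmem hQall,
    liminf_mul_psif_eq hα]
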